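/- Let v : ℕ → ℝ be weakly increasing, and for a ∈ ℝ let l_a = #{j ∈ ℕ : v_j = a} ∈ ℕ ∪ {∞}. Let u = u_1⋯u_n be a word all of whose letters lie in the support {v_j : j ∈ ℕ}, let μ_a(u) = #{m ≤ n : u_m = a}, and let inv(u) = #{(i, j) : i < j, u_i > u_j}. Then P^{(v)}(w_1 = u_1, ..., w_n = u_n) = q^{inv(u)} · q^{−Σ_{b<a} μ_b(u) μ_a(u)} · ∏_a [ (q^{l_a}; q^{−1})_{μ_a(u)} · q^{μ_a(u) Σ_{b<a} l_b} ], where a and b run over the support of v, (x; q^{−1})_k = ∏_{i=0}^{k−1} (1 − x q^{−i}), and the conventions q^{∞} = 0 and (0; q^{−1})_k = 1 are used. -/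

import Mathlib

open MeasureTheory ProbabilityTheory

/-- The first `j` values `σ(0), …, σ(j-1)` of the infinite `q`-shuffle permutation driven by
the (0-indexed) geometric choices `x`. -/
noncomputable def shufflePrefix (x : ℕ → ℕ) : ℕ → List ℕ
  | 0 => []
  | j + 1 => shufflePrefix x j ++ [Nat.nth (fun m => m ∉ shufflePrefix x j) (x j)]

/-- The random injection `σ : ℕ → ℕ` driving the infinite `q`-shuffle: `σ(j)` is the
`x j`-th smallest (0-indexed) natural number not in `{σ(0), …, σ(j-1)}`. -/
noncomputable def shuffleSeq (x : ℕ → ℕ) (j : ℕ) : ℕ :=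
  Nat.nth (fun m => m ∉ shufflePrefix x j) (x j)

/-- `q ^ k` for an extended-natural exponent `k ∈ ℕ ∪ {∞}`, with the convention `q^∞ = 0`
(valid for `0 < q < 1`). -/
noncomputable def qpowE (q : ℝ) (k : ℕ∞) : ℝ := if k = ⊤ then 0 else q ^ k.toNat

/-!
Condition on the first `n` letters. The positions not yet used by `σ`, listed increasingly, are
`Nat.nth` of the complement of the prefix; since `v` is monotone, the next letter is `a` exactly
when the next geometric choice `ξ n` falls into a window `[s, s + t)`, where `s` and `t` count the
unused positions `j` with `v j < a` and `v j = a`. These counts depend only on the earlier letters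
(`s = Σ_{b<a} l_b - #{earlier letters < a}`, `t = l_a - #{earlier letters = a}`), and `ξ n` is
independent of the past, so the conditional probability is `q^s (1 - q^t)`. Multiplying over the
letters, the factors `q^{-#{earlier smaller letters}}` combine with the inversions into
`q^{inv u - Σ_{b<a} μ_b μ_a}`, and the factors `1 - q^{l_a - k}` for the successive occurrences of
`a` form the `q`-Pochhammer symbol.
-/

open Finset

@[simp] lemma qpowE_top (q : ℝ) : qpowE q ⊤ = 0 := if_pos rfl

@[simp] lemma qpowE_zero (q : ℝ) : qpowE q 0 = 1 := by simp [qpowE]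

@[simp] lemma qpowE_natCast (q : ℝ) (k : ℕ) : qpowE q k = q ^ k := by simp [qpowE]

lemma qpowE_add (q : ℝ) (a b : ℕ∞) : qpowE q (a + b) = qpowE q a * qpowE q b := by
  induction a using ENat.recTopCoe <;> induction b using ENat.recTopCoe <;>
    simp [← Nat.cast_add, pow_add]

lemma qpowE_natCast_mul (q : ℝ) (k : ℕ) (a : ℕ∞) : qpowE q (k * a) = qpowE q a ^ k := by
  induction k with
  | zero => simp
  | succ k ih => rw [Nat.cast_succ, add_mul, one_mul, qpowE_add, ih, pow_succ]

lemma qpowE_nonneg {q : ℝ} (hq : 0 ≤ q) (a : ℕ∞) : 0 ≤ qpowE q a := by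
  unfold qpowE; split_ifs <;> positivity

lemma qpowE_le_one {q : ℝ} (hq0 : 0 ≤ q) (hq1 : q ≤ 1) (a : ℕ∞) : qpowE q a ≤ 1 := by
  unfold qpowE; split_ifs
  · exact zero_le_one
  · exact pow_le_one₀ hq0 hq1

lemma qpowE_sub_natCast {q : ℝ} (hq : q ≠ 0) {a : ℕ∞} {k : ℕ} (hk : (k : ℕ∞) ≤ a) :
    qpowE q (a - k) = qpowE q a * q⁻¹ ^ k := by
  conv_rhs => rw [← tsub_add_cancel_of_le hk, qpowE_add, qpowE_natCast, mul_assoc, ← mul_pow,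
    mul_inv_cancel₀ hq, one_pow, mul_one]

/-- When `μ > a`, both sides vanish through the factor `i = a`. -/
lemma prod_one_sub_qpowE_sub {q : ℝ} (hq : q ≠ 0) (a : ℕ∞) (μ : ℕ) :
    ∏ i ∈ range μ, (1 - qpowE q (a - i)) = ∏ i ∈ range μ, (1 - qpowE q a * q⁻¹ ^ i) := by
  by_cases h : (μ : ℕ∞) ≤ a
  · refine prod_congr rfl fun i hi => ?_
    rw [qpowE_sub_natCast hq ((Nat.cast_le.2 (mem_range.1 hi).le).trans h)]
  · obtain ⟨N, rfl⟩ := ENat.ne_top_iff_exists.1 (ne_top_of_lt (not_le.1 h))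
    have hN : N ∈ range μ := mem_range.2 (by exact_mod_cast not_le.1 h)
    rw [prod_eq_zero hN (by simp),
      prod_eq_zero hN (by simp [mul_inv_cancel₀ (pow_ne_zero N hq)])]

lemma prod_card_filter_lt {ι M : Type*} [LinearOrder ι] [CommMonoid M] (s : Finset ι)
    (f : ℕ → M) : ∏ m ∈ s, f #{x ∈ s | x < m} = ∏ i ∈ range #s, f i := by
  induction s using Finset.induction_on_max with
  | empty => simp
  | insert a s ha ih =>
    have has : a ∉ s := fun h => lt_irrefl a (ha a h)
    rw [prod_insert has, card_insert_of_notMem has, prod_range_succ, mul_comm, ← ih]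
    congr 1
    · refine prod_congr rfl fun m hm => ?_
      rw [filter_insert, if_neg (not_lt.2 (ha m hm).le)]
    · rw [filter_insert, if_neg (lt_irrefl a), filter_true_of_mem ha]

section Counting

variable {ι α : Type*} [Fintype ι]

lemma prod_qpowE_comp [DecidableEq α] (q : ℝ) (L : α → ℕ∞) (u : ι → α) :
    ∏ m, qpowE q (L (u m)) = ∏ a ∈ univ.image u, qpowE q (#{m | u m = a} * L a) := by
  simp_rw [prod_comp (fun a => qpowE q (L a)) u, qpowE_natCast_mul]

variable [LinearOrder ι]

lemma prod_one_sub_qpowE_sub_card [DecidableEq α] {q : ℝ} (hq : q ≠ 0) (L : α → ℕ∞)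
    (u : ι → α) :
    ∏ m, (1 - qpowE q (L (u m) - #{m' | m' < m ∧ u m' = u m})) =
      ∏ a ∈ univ.image u, ∏ i ∈ range #{m | u m = a}, (1 - qpowE q (L a) * q⁻¹ ^ i) := by
  rw [← prod_fiberwise_of_maps_to (g := u) fun m _ => mem_image_of_mem u (mem_univ m)]
  refine prod_congr rfl fun a _ => ?_
  rw [← prod_one_sub_qpowE_sub hq,
    ← prod_card_filter_lt _ fun i => 1 - qpowE q (L a - i)]
  refine prod_congr rfl fun m hm => ?_
  rw [(mem_filter.1 hm).2, filter_filter]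
  simp_rw [and_comm]

lemma card_inv_add_sum_card_lt [LinearOrder α] (u : ι → α) :
    #{p : ι × ι | p.1 < p.2 ∧ u p.2 < u p.1} + ∑ m, #{m' | m' < m ∧ u m' < u m} =
      ∑ p ∈ (univ.image u ×ˢ univ.image u).filter (fun p : α × α => p.1 < p.2),
        #{m | u m = p.1} * #{m | u m = p.2} := by
  have hswap : #{p : ι × ι | p.1 < p.2 ∧ u p.2 < u p.1} =
      #{p : ι × ι | p.2 < p.1 ∧ u p.1 < u p.2} :=
    card_equiv (Equiv.prodComm ι ι) (by simp)
  have hsum :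
      ∑ m, #{m' | m' < m ∧ u m' < u m} = #{p : ι × ι | p.1 < p.2 ∧ u p.1 < u p.2} := by
    simp only [card_filter, Fintype.sum_prod_type_right]
  have hsplit : #{p : ι × ι | p.2 < p.1 ∧ u p.1 < u p.2} +
      #{p : ι × ι | p.1 < p.2 ∧ u p.1 < u p.2} = #{p : ι × ι | u p.1 < u p.2} := by
    rw [add_comm, ← card_filter_add_card_filter_not
      (s := univ.filter fun p : ι × ι => u p.1 < u p.2) (fun p : ι × ι => p.1 < p.2),
      filter_filter, filter_filter]
    congr 2 <;> ext p <;> simp only [mem_filter, mem_univ, true_and, not_lt]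
    · exact and_comm
    · exact ⟨fun h => ⟨h.2, h.1.le⟩,
        fun h => ⟨h.2.lt_of_ne fun he => (congrArg u he ▸ h.1).false, h.1⟩⟩
  have hfib : #{p : ι × ι | u p.1 < u p.2} =
      ∑ p ∈ (univ.image u ×ˢ univ.image u).filter (fun p : α × α => p.1 < p.2),
        #{m | u m = p.1} * #{m | u m = p.2} := by
    rw [card_eq_sum_card_fiberwise (f := Prod.map u u)
      (t := (univ.image u ×ˢ univ.image u).filter (fun p : α × α => p.1 < p.2))
      (by simp [Set.MapsTo])]
    refine sum_congr rfl fun p hp => ?_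
    rw [← card_product, filter_filter, ← filter_product]
    congr 1; ext m
    simp only [mem_filter, mem_univ, true_and, Prod.map, Prod.ext_iff, mem_product]
    exact ⟨fun h => h.2, fun h => ⟨h.1 ▸ h.2 ▸ (mem_filter.1 hp).2, h⟩⟩
  rw [hswap, hsum, hsplit, hfib]

lemma prod_shuffle_factors {q : ℝ} (hq : q ≠ 0) (v : ℕ → ℝ) (u : ι → ℝ) :
    ∏ m, (qpowE q {j | v j < u m}.encard * q⁻¹ ^ #{m' | m' < m ∧ u m' < u m} *
        (1 - qpowE q ({j | v j = u m}.encard - #{m' | m' < m ∧ u m' = u m}))) =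
      q ^ #{p : ι × ι | p.1 < p.2 ∧ u p.2 < u p.1} *
        q ^ (-((∑ p ∈ (univ.image u ×ˢ univ.image u).filter (fun p : ℝ × ℝ => p.1 < p.2),
            #{m | u m = p.1} * #{m | u m = p.2} : ℕ) : ℤ)) *
        ∏ a ∈ univ.image u,
          (∏ i ∈ range #{m | u m = a}, (1 - qpowE q {j | v j = a}.encard * q⁻¹ ^ i)) *
            qpowE q (#{m | u m = a} * {j | v j < a}.encard) := by
  rw [prod_mul_distrib, prod_mul_distrib, prod_qpowE_comp q (fun a => {j | v j < a}.encard) u,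
    prod_one_sub_qpowE_sub_card hq (fun a => {j | v j = a}.encard) u, prod_pow_eq_pow_sum,
    ← card_inv_add_sum_card_lt, prod_mul_distrib, Nat.cast_add, neg_add, zpow_add₀ hq,
    zpow_neg, zpow_neg, zpow_natCast, zpow_natCast, inv_pow, ← mul_assoc (q ^ _),
    mul_inv_cancel₀ (pow_ne_zero _ hq), one_mul]
  ring

end Counting

lemma Nat.nth_mem_iff_lt_encard {p : ℕ → Prop} (hp : (Set.ofPred p).Infinite) {D : Set ℕ}
    (hD : IsLowerSet D) (i : ℕ) : Nat.nth p i ∈ D ↔ (i : ℕ∞) < {j ∈ D | p j}.encard := by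
  classical
  have hcount : Nat.count p (Nat.nth p i) = i := Nat.count_nth_of_infinite hp i
  constructor
  · intro hi
    have hsub : (↑{j ∈ range (Nat.nth p i + 1) | p j} : Set ℕ) ⊆ {j ∈ D | p j} := by
      intro j hj
      simp only [coe_filter, mem_range, Set.mem_ofPred_eq, Nat.lt_succ_iff] at hj
      exact ⟨hD hj.1 hi, hj.2⟩
    calc (i : ℕ∞) < (i + 1 : ℕ) := by exact_mod_cast Nat.lt_succ_self i
      _ = (↑{j ∈ range (Nat.nth p i + 1) | p j} : Set ℕ).encard := by
        rw [Set.encard_coe_eq_coe_finsetCard, ← Nat.count_eq_card_filter_range, Nat.count_succ,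
          hcount, if_pos (Nat.nth_mem_of_infinite hp i)]
      _ ≤ _ := Set.encard_le_encard hsub
  · intro hlt
    by_contra hi
    have hsub : {j ∈ D | p j} ⊆ ↑{j ∈ range (Nat.nth p i) | p j} := by
      intro j hj
      simp only [coe_filter, mem_range, Set.mem_ofPred_eq]
      exact ⟨lt_of_not_ge fun h => hi (hD h hj.1), hj.2⟩
    refine (Set.encard_le_encard hsub).not_gt ?_
    rwa [Set.encard_coe_eq_coe_finsetCard, ← Nat.count_eq_card_filter_range, hcount]

section Shuffle

variable (x : ℕ → ℕ)

lemma shufflePrefix_eq_map (j : ℕ) : shufflePrefix x j = (List.range j).map (shuffleSeq x) := by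
  induction j with
  | zero => rfl
  | succ j ih => rw [shufflePrefix, List.range_succ, List.map_append, ← ih]; rfl

lemma mem_shufflePrefix {j a : ℕ} : a ∈ shufflePrefix x j ↔ ∃ m < j, shuffleSeq x m = a := by
  simp [shufflePrefix_eq_map]

lemma infinite_setOf_notMem_shufflePrefix (j : ℕ) : {m | m ∉ shufflePrefix x j}.Infinite :=
  (shufflePrefix x j).finite_toSet.infinite_compl

lemma shuffleSeq_injective : Function.Injective (shuffleSeq x) := by
  have hnew (j : ℕ) : shuffleSeq x j ∉ shufflePrefix x j :=
    Nat.nth_mem_of_infinite (infinite_setOf_notMem_shufflePrefix x j) (x j)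
  intro i j h
  by_contra hne
  rcases Nat.lt_or_gt_of_ne hne with hij | hji
  · exact hnew j ((mem_shufflePrefix x).2 ⟨i, hij, h⟩)
  · exact hnew i ((mem_shufflePrefix x).2 ⟨j, hji, h.symm⟩)

lemma dependsOn_shufflePrefix (j : ℕ) : DependsOn (shufflePrefix · j) (range j : Set ℕ) := by
  induction j with
  | zero => exact fun _ _ _ => rfl
  | succ j ih =>
    intro x y h
    have hj : shufflePrefix x j = shufflePrefix y j :=
      ih fun i hi => h i (by simp only [coe_range, Set.mem_Iio] at hi ⊢; omega)
    simp only [shufflePrefix, hj, h j (by simp)]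

lemma dependsOn_shuffleSeq (j : ℕ) : DependsOn (shuffleSeq · j) (range (j + 1) : Set ℕ) := by
  intro x y h
  have hj : shufflePrefix x j = shufflePrefix y j :=
    dependsOn_shufflePrefix j fun i hi =>
      h i (by simp only [coe_range, Set.mem_Iio] at hi ⊢; omega)
  simp only [shuffleSeq, hj, h j (by simp)]

variable {x} {v U : ℕ → ℝ} {n : ℕ}

lemma encard_eq_encard_notMem_shufflePrefix_add (hx : ∀ m < n, v (shuffleSeq x m) = U m)
    (r : ℝ → Prop) [DecidablePred r] :
    {j | r (v j)}.encard =
      {j | r (v j) ∧ j ∉ shufflePrefix x n}.encard + #{m ∈ range n | r (U m)} := by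
  have himage : {j | r (v j)} ∩ {j | j ∈ shufflePrefix x n} =
      shuffleSeq x '' ↑{m ∈ range n | r (U m)} := by
    ext j
    simp only [Set.mem_inter_iff, Set.mem_ofPred_eq, mem_shufflePrefix, coe_filter, mem_range,
      Set.mem_image]
    constructor
    · rintro ⟨hr, m, hm, rfl⟩
      exact ⟨m, ⟨hm, hx m hm ▸ hr⟩, rfl⟩
    · rintro ⟨m, ⟨hm, hr⟩, rfl⟩
      exact ⟨(hx m hm).symm ▸ hr, m, hm, rfl⟩
  rw [← Set.encard_sdiff_add_encard_inter {j | r (v j)} {j | j ∈ shufflePrefix x n}, himage,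
    (shuffleSeq_injective x).injOn.encard_image, Set.encard_coe_eq_coe_finsetCard]
  rfl

/-- The window for `x n` is bounded by the numbers of unused indices `j` with `v j < a` and with
`v j ≤ a`, because `Nat.nth` enumerates the unused indices increasingly. -/
lemma shuffleSeq_eq_iff (hv : Monotone v) (hx : ∀ m < n, v (shuffleSeq x m) = U m) (a : ℝ) :
    v (shuffleSeq x n) = a ↔
      {j | v j < a}.encard - #{m ∈ range n | U m < a} ≤ x n ∧
        (x n : ℕ∞) < {j | v j < a}.encard - #{m ∈ range n | U m < a} +
          ({j | v j = a}.encard - #{m ∈ range n | U m = a}) := by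
  have hrem (r : ℝ → Prop) [DecidablePred r] : {j | r (v j) ∧ j ∉ shufflePrefix x n}.encard =
      {j | r (v j)}.encard - #{m ∈ range n | r (U m)} := by
    rw [encard_eq_encard_notMem_shufflePrefix_add hx r,
      (ENat.addLECancellable_natCast _).add_tsub_cancel_right]
  have hle : {j | v j ≤ a ∧ j ∉ shufflePrefix x n} =
      {j | v j < a ∧ j ∉ shufflePrefix x n} ∪ {j | v j = a ∧ j ∉ shufflePrefix x n} := by
    ext j; simp only [Set.mem_ofPred_eq, Set.mem_union, le_iff_lt_or_eq, or_and_right]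
  have hdisj : Disjoint {j | v j < a ∧ j ∉ shufflePrefix x n}
      {j | v j = a ∧ j ∉ shufflePrefix x n} :=
    Set.disjoint_left.2 fun j h1 h2 => h1.1.ne h2.1
  have hp := infinite_setOf_notMem_shufflePrefix x n
  have hlt := Nat.nth_mem_iff_lt_encard hp (D := {j | v j < a})
    (fun _ _ hji hi => (hv hji).trans_lt hi) (x n)
  have hle' := Nat.nth_mem_iff_lt_encard hp (D := {j | v j ≤ a})
    (fun _ _ hji hi => (hv hji).trans hi) (x n)
  simp only [Set.mem_ofPred_eq] at hlt hle'
  rw [← hrem (· < a), ← hrem (· = a), ← Set.encard_union_eq hdisj, ← hle, ← not_lt, ← hlt,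
    ← hle', eq_iff_le_not_lt, and_comm]
  rfl

end Shuffle

section Geometric

variable {Ω : Type*} [MeasurableSpace Ω] {P : Measure Ω} [IsProbabilityMeasure P] {q : ℝ}
  {f : Ω → ℕ}

lemma measure_preimage_Ici_of_geometric (hq0 : 0 ≤ q) (hq1 : q ≤ 1) (hf : Measurable f)
    (hgeom : ∀ i : ℕ, P {ω | f ω = i} = ENNReal.ofReal ((1 - q) * q ^ i)) (s : ℕ∞) :
    P (f ⁻¹' {i | s ≤ i}) = ENNReal.ofReal (qpowE q s) := by
  induction s using ENat.recTopCoe with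
  | top => simp
  | coe N =>
    have hcompl : f ⁻¹' {i : ℕ | (N : ℕ∞) ≤ i} = (f ⁻¹' ↑(range N))ᶜ := by ext; simp
    rw [hcompl, prob_compl_eq_one_sub (hf (Set.to_countable _).measurableSet),
      ← sum_measure_preimage_singleton _ fun i _ => hf (measurableSet_singleton i)]
    simp_rw [Set.preimage, Set.mem_singleton_iff, hgeom]
    rw [← ENNReal.ofReal_sum_of_nonneg fun i _ =>
        mul_nonneg (sub_nonneg.2 hq1) (pow_nonneg hq0 i),
      ← mul_sum, mul_neg_geom_sum, ← ENNReal.ofReal_one,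
      ← ENNReal.ofReal_sub _ (sub_nonneg.2 (pow_le_one₀ hq0 hq1)), sub_sub_cancel,
      qpowE_natCast]

lemma measure_preimage_Ico_of_geometric (hq0 : 0 ≤ q) (hq1 : q ≤ 1) (hf : Measurable f)
    (hgeom : ∀ i : ℕ, P {ω | f ω = i} = ENNReal.ofReal ((1 - q) * q ^ i)) (s t : ℕ∞) :
    P (f ⁻¹' {i | s ≤ i ∧ (i : ℕ∞) < s + t}) =
      ENNReal.ofReal (qpowE q s * (1 - qpowE q t)) := by
  have hdiff : f ⁻¹' {i | s ≤ i ∧ (i : ℕ∞) < s + t} =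
      f ⁻¹' {i | s ≤ i} \ f ⁻¹' {i | s + t ≤ i} := by
    ext; simp [not_le]
  have hsub : {i : ℕ | s + t ≤ i} ⊆ {i | s ≤ i} := fun _ (hi : s + t ≤ _) =>
    le_self_add.trans hi
  rw [hdiff, measure_sdiff (Set.preimage_mono hsub)
      (hf (Set.to_countable _).measurableSet).nullMeasurableSet (measure_ne_top _ _),
    measure_preimage_Ici_of_geometric hq0 hq1 hf hgeom,
    measure_preimage_Ici_of_geometric hq0 hq1 hf hgeom,
    ← ENNReal.ofReal_sub _ (qpowE_nonneg hq0 _), qpowE_add, mul_one_sub]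

end Geometric

section Independence

variable {Ω : Type*} [MeasurableSpace Ω] {P : Measure Ω} {ξ : ℕ → Ω → ℕ}

lemma measurable_comp_of_dependsOn (hmeas : ∀ j, Measurable (ξ j)) {β : Type*} [Nonempty β]
    [MeasurableSpace β] {F : (ℕ → ℕ) → β} {S : Finset ℕ} (hF : DependsOn F (S : Set ℕ)) :
    Measurable fun ω => F fun j => ξ j ω := by
  obtain ⟨g, rfl⟩ := dependsOn_iff_exists_comp.1 hF
  exact (measurable_of_countable g).comp (measurable_pi_lambda _ fun j => hmeas j)

lemma measure_inter_preimage_eq_mul_of_dependsOn (hmeas : ∀ j, Measurable (ξ j))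
    (hindep : iIndepFun ξ P) {S : Finset ℕ} {A : Set (ℕ → ℕ)}
    (hA : DependsOn (· ∈ A) (S : Set ℕ)) {n : ℕ} (hn : n ∉ S) (T : Set ℕ) :
    P ((fun ω j => ξ j ω) ⁻¹' A ∩ ξ n ⁻¹' T) =
      P ((fun ω j => ξ j ω) ⁻¹' A) * P (ξ n ⁻¹' T) := by
  obtain ⟨g, hg⟩ := dependsOn_iff_exists_comp.1 hA
  have hA' : (fun ω j => ξ j ω) ⁻¹' A = (fun ω (j : S) => ξ j ω) ⁻¹' {y | g y} := by
    ext ω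
    exact iff_of_eq (congrFun hg _)
  have hind : IndepFun (fun ω (j : S) => ξ j ω) (ξ n) P :=
    (hindep.indepFun_finset S {n} (disjoint_singleton_right.2 hn) hmeas).comp measurable_id
      (measurable_pi_apply (⟨n, mem_singleton_self n⟩ : ({n} : Finset ℕ)))
  rw [hA']
  exact hind.measure_inter_preimage_eq_mul _ _ (Set.to_countable _).measurableSet
    (Set.to_countable _).measurableSet

end Independence

/-- The conditional probability that the `n`-th letter of the shuffle is `U n`, given that the
previous ones are `U 0, …, U (n-1)`. -/
noncomputable def shuffleFactor (q : ℝ) (v U : ℕ → ℝ) (n : ℕ) : ℝ :=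
  qpowE q {j | v j < U n}.encard * q⁻¹ ^ #{m ∈ range n | U m < U n} *
    (1 - qpowE q ({j | v j = U n}.encard - #{m ∈ range n | U m = U n}))

lemma shuffleFactor_nonneg {q : ℝ} (hq0 : 0 ≤ q) (hq1 : q ≤ 1) (v U : ℕ → ℝ) (n : ℕ) :
    0 ≤ shuffleFactor q v U n :=
  mul_nonneg (mul_nonneg (qpowE_nonneg hq0 _) (pow_nonneg (inv_nonneg.2 hq0) _))
    (sub_nonneg.2 (qpowE_le_one hq0 hq1 _))

section Cylinder

variable {Ω : Type*} [MeasurableSpace Ω] {P : Measure Ω} [IsProbabilityMeasure P] {q : ℝ}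
  {ξ : ℕ → Ω → ℕ} {v : ℕ → ℝ}

lemma measure_shuffle_cylinder_succ (hq0 : 0 < q) (hq1 : q < 1) (hmeas : ∀ j, Measurable (ξ j))
    (hindep : iIndepFun ξ P)
    (hgeom : ∀ j i : ℕ, P {ω | ξ j ω = i} = ENNReal.ofReal ((1 - q) * q ^ i))
    (hv : Monotone v) (U : ℕ → ℝ) (n : ℕ) :
    P {ω | ∀ m < n + 1, v (shuffleSeq (fun t => ξ t ω) m) = U m} =
      P {ω | ∀ m < n, v (shuffleSeq (fun t => ξ t ω) m) = U m} *
        ENNReal.ofReal (shuffleFactor q v U n) := by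
  set E : Set (ℕ → ℕ) := {x | ∀ m < n, v (shuffleSeq x m) = U m}
  set s := {j | v j < U n}.encard - #{m ∈ range n | U m < U n}
  set t := {j | v j = U n}.encard - #{m ∈ range n | U m = U n}
  have hE : DependsOn (· ∈ E) (range n : Set ℕ) := fun x y h =>
    propext <| forall₂_congr fun m hm => by
      rw [show shuffleSeq x m = shuffleSeq y m from dependsOn_shuffleSeq m fun i hi =>
        h i (by simp only [coe_range, Set.mem_Iio] at hi ⊢; omega)]
  have hsucc : {ω | ∀ m < n + 1, v (shuffleSeq (fun t => ξ t ω) m) = U m} =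
      (fun ω j => ξ j ω) ⁻¹' E ∩ ξ n ⁻¹' {i | s ≤ i ∧ (i : ℕ∞) < s + t} := by
    ext ω
    simp only [Nat.lt_succ_iff_lt_or_eq, or_imp, forall_and, forall_eq]
    exact and_congr_right fun hx => shuffleSeq_eq_iff hv hx (U n)
  have hcyl :
      {ω | ∀ m < n, v (shuffleSeq (fun t => ξ t ω) m) = U m} = (fun ω j => ξ j ω) ⁻¹' E := rfl
  rw [hsucc, hcyl, measure_inter_preimage_eq_mul_of_dependsOn hmeas hindep hE notMem_range_self,
    measure_preimage_Ico_of_geometric hq0.le hq1.le (hmeas n) (hgeom n)]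
  rcases Set.eq_empty_or_nonempty ((fun ω j => ξ j ω) ⁻¹' E) with hempty | ⟨ω₀, hω₀⟩
  · rw [hempty, measure_empty, zero_mul, zero_mul]
  · -- an admissible prefix shows that the truncated subtraction in `s` is exact
    have hk : (#{m ∈ range n | U m < U n} : ℕ∞) ≤ {j | v j < U n}.encard := by
      rw [encard_eq_encard_notMem_shufflePrefix_add hω₀ (· < U n)]
      exact le_add_self
    rw [shuffleFactor, qpowE_sub_natCast hq0.ne' hk]

lemma measure_shuffle_cylinder (hq0 : 0 < q) (hq1 : q < 1) (hmeas : ∀ j, Measurable (ξ j))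
    (hindep : iIndepFun ξ P)
    (hgeom : ∀ j i : ℕ, P {ω | ξ j ω = i} = ENNReal.ofReal ((1 - q) * q ^ i))
    (hv : Monotone v) (U : ℕ → ℝ) (n : ℕ) :
    P {ω | ∀ m < n, v (shuffleSeq (fun t => ξ t ω) m) = U m} =
      ∏ m ∈ range n, ENNReal.ofReal (shuffleFactor q v U m) := by
  induction n with
  | zero => simp
  | succ n ih =>
    rw [measure_shuffle_cylinder_succ hq0 hq1 hmeas hindep hgeom hv, ih, prod_range_succ]

end Cylinder

lemma card_filter_range_val {n : ℕ} (m : Fin n) (r : ℕ → Prop) [DecidablePred r] :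
    #{k ∈ range m | r k} = #{k : Fin n | k < m ∧ r k} := by
  refine (card_bij (fun (k : Fin n) _ => (k : ℕ)) ?_ (fun _ _ _ _ => Fin.ext) ?_).symm
  · intro k hk
    simp only [mem_filter, mem_univ, true_and, mem_range] at hk ⊢
    exact hk
  · intro k hk
    simp only [mem_filter, mem_range] at hk
    exact ⟨⟨k, hk.1.trans m.isLt⟩, mem_filter.2 ⟨mem_univ _, hk⟩, rfl⟩

theorem stmt_13_general (q : ℝ) (hq0 : 0 < q) (hq1 : q < 1)
    (Ω : Type*) [MeasurableSpace Ω] (P : Measure Ω) [IsProbabilityMeasure P]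
    (ξ : ℕ → Ω → ℕ) (hmeas : ∀ j, Measurable (ξ j))
    (hindep : iIndepFun ξ P)
    (hgeom : ∀ j i : ℕ, P {ω | ξ j ω = i} = ENNReal.ofReal ((1 - q) * q ^ i))
    (v : ℕ → ℝ) (hv : Monotone v)
    (n : ℕ) (u : Fin n → ℝ) :
    (P.map (fun ω (j : ℕ) => v (shuffleSeq (fun t => ξ t ω) j)))
        {w : ℕ → ℝ | ∀ m : Fin n, w (m : ℕ) = u m} =
      ENNReal.ofReal
        (q ^ ((Finset.univ.filter
            (fun p : Fin n × Fin n => p.1 < p.2 ∧ u p.2 < u p.1)).card) *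
          q ^ (-((∑ p ∈ ((Finset.univ.image u) ×ˢ (Finset.univ.image u)).filter
              (fun p : ℝ × ℝ => p.1 < p.2),
              (Finset.univ.filter (fun m : Fin n => u m = p.1)).card *
                (Finset.univ.filter (fun m : Fin n => u m = p.2)).card : ℕ) : ℤ)) *
          ∏ a ∈ Finset.univ.image u,
            (∏ i ∈ Finset.range ((Finset.univ.filter (fun m : Fin n => u m = a)).card),
                (1 - qpowE q {j : ℕ | v j = a}.encard * q⁻¹ ^ i)) *
              qpowE q (((Finset.univ.filter (fun m : Fin n => u m = a)).card : ℕ∞) *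
                {j : ℕ | v j < a}.encard)) := by
  set U : ℕ → ℝ := fun t => if h : t < n then u ⟨t, h⟩ else 0
  have hU (m : Fin n) : U m = u m := dif_pos m.isLt
  have hmeasF : Measurable fun ω (j : ℕ) => v (shuffleSeq (fun t => ξ t ω) j) :=
    measurable_pi_lambda _ fun j =>
      (measurable_from_top (f := v)).comp
        (measurable_comp_of_dependsOn hmeas (dependsOn_shuffleSeq j))
  have hcyl : MeasurableSet {w : ℕ → ℝ | ∀ m : Fin n, w (m : ℕ) = u m} := by
    simp only [Set.ofPred_forall]
    exact MeasurableSet.iInter fun m => measurable_pi_apply _ (measurableSet_singleton _)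
  have hpre : (fun ω (j : ℕ) => v (shuffleSeq (fun t => ξ t ω) j)) ⁻¹'
      {w | ∀ m : Fin n, w (m : ℕ) = u m} =
      {ω | ∀ m < n, v (shuffleSeq (fun t => ξ t ω) m) = U m} := by
    ext ω
    simp only [Set.mem_preimage, Set.mem_ofPred_eq, Fin.forall_iff, ← hU]
  rw [Measure.map_apply hmeasF hcyl, hpre,
    measure_shuffle_cylinder hq0 hq1 hmeas hindep hgeom hv, ← Fin.prod_univ_eq_prod_range,
    ← ENNReal.ofReal_prod_of_nonneg fun (m : Fin n) _ =>
      shuffleFactor_nonneg hq0.le hq1.le v U m,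
    ← prod_shuffle_factors hq0.ne']
  refine congrArg _ (prod_congr rfl fun m _ => ?_)
  simp only [shuffleFactor, card_filter_range_val, hU]

/-- the cylinder probabilities of the law `P^{(v)}` of the infinite `q`-shuffle
of a weakly increasing word `v`.  For a word `u` with letters in the support of `v`,
`P^{(v)}(w_1 = u_1, …, w_n = u_n)
  = q^{inv u} q^{-Σ_{b<a} μ_b(u) μ_a(u)} ∏_a (q^{l_a}; q^{-1})_{μ_a(u)} q^{μ_a(u) Σ_{b<a} l_b}`,
where `l_a = #{j : v_j = a}` (so `Σ_{b<a} l_b = #{j : v_j < a}`), `μ_a(u) = #{m : u_m = a}`,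
the product runs over the (distinct) letters of `u` (all other letters of the support
contribute a factor 1), and `q^∞ = 0`, `(0; q^{-1})_k = 1`. -/
theorem stmt_13 (q : ℝ) (hq0 : 0 < q) (hq1 : q < 1)
    (Ω : Type*) [MeasurableSpace Ω] (P : Measure Ω) [IsProbabilityMeasure P]
    (ξ : ℕ → Ω → ℕ) (hmeas : ∀ j, Measurable (ξ j))
    (hindep : iIndepFun ξ P)
    (hgeom : ∀ j i : ℕ, P {ω | ξ j ω = i} = ENNReal.ofReal ((1 - q) * q ^ i))
    (v : ℕ → ℝ) (hv : Monotone v)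
    (n : ℕ) (u : Fin n → ℝ) (hu : ∀ m : Fin n, u m ∈ Set.range v) :
    (P.map (fun ω (j : ℕ) => v (shuffleSeq (fun t => ξ t ω) j)))
        {w : ℕ → ℝ | ∀ m : Fin n, w (m : ℕ) = u m} =
      ENNReal.ofReal
        (q ^ ((Finset.univ.filter
            (fun p : Fin n × Fin n => p.1 < p.2 ∧ u p.2 < u p.1)).card) *
          q ^ (-((∑ p ∈ ((Finset.univ.image u) ×ˢ (Finset.univ.image u)).filter
              (fun p : ℝ × ℝ => p.1 < p.2),
              (Finset.univ.filter (fun m : Fin n => u m = p.1)).card *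
                (Finset.univ.filter (fun m : Fin n => u m = p.2)).card : ℕ) : ℤ)) *
          ∏ a ∈ Finset.univ.image u,
            (∏ i ∈ Finset.range ((Finset.univ.filter (fun m : Fin n => u m = a)).card),
                (1 - qpowE q {j : ℕ | v j = a}.encard * q⁻¹ ^ i)) *
              qpowE q (((Finset.univ.filter (fun m : Fin n => u m = a)).card : ℕ∞) *
                {j : ℕ | v j < a}.encard)) :=
  stmt_13_general q hq0 hq1 Ω P ξ hmeas hindep hgeom v hv n u
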